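/- Let μ₁,₁ⁿ (n > 3) be the complex algebra with basis e₁,…,eₙ and only nonzero products eᵢeⱼ = e_{i+j} for 2 ≤ i+j ≤ n−1. A linear map D on μ₁,₁ⁿ is a derivation if and only if there exist scalars α₁,…,αₙ, β_{n−1}, βₙ such that D(e₁) = ∑_{i=1}^{n} αᵢeᵢ, D(eᵢ) = i·∑_{k=i}^{n−1} α_{k−i+1}e_k for 2 ≤ i ≤ n−1, and D(eₙ) = β_{n−1}e_{n−1} + βₙeₙ. In particular dim Der(μ₁,₁ⁿ) = n + 2. -/

import Mathlib

/-!
With 0-based indices, `e_i = e_0 ^ (i + 1)` for `i ≤ n - 2`, while `e_{n-1}` annihilates the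
algebra `A`. The Leibniz rule on pairs of basis vectors therefore forces the power rule
`D e_i = (i + 1) e_0 ^ i D e_0`, keeps `A² = span (e_1, …, e_{n-2})` invariant and sends `e_{n-1}`
into `Ann A = span (e_{n-2}, e_{n-1})`; conversely, every linear map of this shape satisfies the
Leibniz rule on basis pairs. A derivation is thus freely determined by `D e_0 ∈ ℂⁿ` and the two
coordinates of `D e_{n-1}`, which gives dimension `n + 2`.
-/


/-- basis vectors -/
noncomputable def e (n : ℕ) (i : Fin n) : Fin n → ℂ := Pi.single i 1

/-- product of the null-filiform algebra μ₀ⁿ (0-based indices: index a ↔ e_{a+1}) -/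
noncomputable def mul0 (n : ℕ) (x y : Fin n → ℂ) : Fin n → ℂ :=
  fun k => ∑ i : Fin n, ∑ j : Fin n,
    if (i : ℕ) + (j : ℕ) + 1 = (k : ℕ) then x i * y j else 0

def IsDer {n : ℕ} (μ : (Fin n → ℂ) → (Fin n → ℂ) → Fin n → ℂ)
    (D : (Fin n → ℂ) →ₗ[ℂ] (Fin n → ℂ)) : Prop :=
  ∀ x y, D (μ x y) = μ (D x) y + μ x (D y)

def IsLocDer {n : ℕ} (μ : (Fin n → ℂ) → (Fin n → ℂ) → Fin n → ℂ)
    (Δ : (Fin n → ℂ) →ₗ[ℂ] (Fin n → ℂ)) : Prop :=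
  ∀ x, ∃ D, IsDer μ D ∧ Δ x = D x

/-- the submodule of derivations, given bilinearity of μ -/
noncomputable def derSubmodule (n : ℕ) (μ : (Fin n → ℂ) → (Fin n → ℂ) → Fin n → ℂ)
    (hal : ∀ x y z, μ (x + y) z = μ x z + μ y z)
    (har : ∀ x y z, μ x (y + z) = μ x y + μ x z)
    (hsl : ∀ (c : ℂ) x y, μ (c • x) y = c • μ x y)
    (hsr : ∀ (c : ℂ) x y, μ x (c • y) = c • μ x y) :
    Submodule ℂ ((Fin n → ℂ) →ₗ[ℂ] (Fin n → ℂ)) where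
  carrier := {D | IsDer μ D}
  zero_mem' := by
    intro x y
    have h1 : μ 0 y = 0 := by simpa using hsl 0 0 y
    have h2 : μ x 0 = 0 := by simpa using hsr 0 x 0
    simp [h1, h2]
  add_mem' := by
    intro D1 D2 h1 h2 x y
    simp only [LinearMap.add_apply, h1 x y, h2 x y, hal, har]
    abel
  smul_mem' := by
    intro c D hD x y
    simp only [LinearMap.smul_apply, hD x y, smul_add, hsl, hsr]

/-- the submodule of local derivations, given bilinearity of μ -/
noncomputable def locDerSubmodule (n : ℕ) (μ : (Fin n → ℂ) → (Fin n → ℂ) → Fin n → ℂ)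
    (hal : ∀ x y z, μ (x + y) z = μ x z + μ y z)
    (har : ∀ x y z, μ x (y + z) = μ x y + μ x z)
    (hsl : ∀ (c : ℂ) x y, μ (c • x) y = c • μ x y)
    (hsr : ∀ (c : ℂ) x y, μ x (c • y) = c • μ x y) :
    Submodule ℂ ((Fin n → ℂ) →ₗ[ℂ] (Fin n → ℂ)) where
  carrier := {Δ | IsLocDer μ Δ}
  zero_mem' := by
    intro x
    exact ⟨0, (derSubmodule n μ hal har hsl hsr).zero_mem, rfl⟩
  add_mem' := by
    intro D1 D2 h1 h2 x
    obtain ⟨E1, hE1, he1⟩ := h1 x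
    obtain ⟨E2, hE2, he2⟩ := h2 x
    exact ⟨E1 + E2, (derSubmodule n μ hal har hsl hsr).add_mem hE1 hE2, by
      simp [he1, he2]⟩
  smul_mem' := by
    intro c Δ hΔ x
    obtain ⟨E, hE, he⟩ := hΔ x
    exact ⟨c • E, (derSubmodule n μ hal har hsl hsr).smul_mem c hE, by simp [he]⟩

lemma mul0_add_left (n : ℕ) (x y z : Fin n → ℂ) :
    mul0 n (x + y) z = mul0 n x z + mul0 n y z := by
  funext k
  simp only [mul0, Pi.add_apply]
  rw [← Finset.sum_add_distrib]
  refine Finset.sum_congr rfl fun i _ => ?_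
  rw [← Finset.sum_add_distrib]
  refine Finset.sum_congr rfl fun j _ => ?_
  split <;> ring

lemma mul0_add_right (n : ℕ) (x y z : Fin n → ℂ) :
    mul0 n x (y + z) = mul0 n x y + mul0 n x z := by
  funext k
  simp only [mul0, Pi.add_apply]
  rw [← Finset.sum_add_distrib]
  refine Finset.sum_congr rfl fun i _ => ?_
  rw [← Finset.sum_add_distrib]
  refine Finset.sum_congr rfl fun j _ => ?_
  split <;> ring

lemma mul0_smul_left (n : ℕ) (c : ℂ) (x y : Fin n → ℂ) :
    mul0 n (c • x) y = c • mul0 n x y := by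
  funext k
  simp only [mul0, Pi.smul_apply, smul_eq_mul, Finset.mul_sum]
  refine Finset.sum_congr rfl fun i _ => ?_
  refine Finset.sum_congr rfl fun j _ => ?_
  split <;> ring

lemma mul0_smul_right (n : ℕ) (c : ℂ) (x y : Fin n → ℂ) :
    mul0 n x (c • y) = c • mul0 n x y := by
  funext k
  simp only [mul0, Pi.smul_apply, smul_eq_mul, Finset.mul_sum]
  refine Finset.sum_congr rfl fun i _ => ?_
  refine Finset.sum_congr rfl fun j _ => ?_
  split <;> ring


noncomputable def mul11 (n : ℕ) (x y : Fin n → ℂ) : Fin n → ℂ :=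
  fun k => ∑ i : Fin n, ∑ j : Fin n,
    if (i : ℕ) + (j : ℕ) + 1 = (k : ℕ) ∧ (k : ℕ) + 2 ≤ n then x i * y j else 0

lemma mul11_add_left (n : ℕ) (x y z : Fin n → ℂ) :
    mul11 n (x + y) z = mul11 n x z + mul11 n y z := by
  funext k
  simp only [mul11, Pi.add_apply]
  rw [← Finset.sum_add_distrib]
  refine Finset.sum_congr rfl fun i _ => ?_
  rw [← Finset.sum_add_distrib]
  refine Finset.sum_congr rfl fun j _ => ?_
  split <;> ring

lemma mul11_add_right (n : ℕ) (x y z : Fin n → ℂ) :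
    mul11 n x (y + z) = mul11 n x y + mul11 n x z := by
  funext k
  simp only [mul11, Pi.add_apply]
  rw [← Finset.sum_add_distrib]
  refine Finset.sum_congr rfl fun i _ => ?_
  rw [← Finset.sum_add_distrib]
  refine Finset.sum_congr rfl fun j _ => ?_
  split <;> ring

lemma mul11_smul_left (n : ℕ) (c : ℂ) (x y : Fin n → ℂ) :
    mul11 n (c • x) y = c • mul11 n x y := by
  funext k
  simp only [mul11, Pi.smul_apply, smul_eq_mul, Finset.mul_sum]
  refine Finset.sum_congr rfl fun i _ => ?_
  refine Finset.sum_congr rfl fun j _ => ?_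
  split <;> ring

lemma mul11_smul_right (n : ℕ) (c : ℂ) (x y : Fin n → ℂ) :
    mul11 n x (c • y) = c • mul11 n x y := by
  funext k
  simp only [mul11, Pi.smul_apply, smul_eq_mul, Finset.mul_sum]
  refine Finset.sum_congr rfl fun i _ => ?_
  refine Finset.sum_congr rfl fun j _ => ?_
  split <;> ring

lemma mul11_comm (n : ℕ) (x y : Fin n → ℂ) : mul11 n x y = mul11 n y x := by
  funext k
  rw [mul11, mul11, Finset.sum_comm]
  simp only [add_comm (_ : ℕ) (_ : ℕ), mul_comm (x _)]

lemma mul11_e_left_apply (n : ℕ) (a : Fin n) (y : Fin n → ℂ) (k : Fin n) :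
    mul11 n (e n a) y k =
      if h : (a : ℕ) + 1 ≤ k ∧ (k : ℕ) + 2 ≤ n then y ⟨k - a - 1, by omega⟩ else 0 := by
  rw [mul11, Fintype.sum_eq_single a fun i hi => by simp [e, hi]]
  simp only [e, Pi.single_eq_same, one_mul]
  split_ifs with h
  · rw [Fintype.sum_eq_single ⟨k - a - 1, by omega⟩
      fun j hj => if_neg fun hj' => hj (by ext; simp; omega)]
    exact if_pos (by simp; omega)
  · exact Finset.sum_eq_zero fun j _ => if_neg (by omega)

lemma mul11_e_right_apply (n : ℕ) (x : Fin n → ℂ) (b k : Fin n) :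
    mul11 n x (e n b) k =
      if h : (b : ℕ) + 1 ≤ k ∧ (k : ℕ) + 2 ≤ n then x ⟨k - b - 1, by omega⟩ else 0 := by
  rw [mul11_comm, mul11_e_left_apply]

lemma mul11_e_e (n : ℕ) (a b : Fin n) :
    mul11 n (e n a) (e n b) =
      if h : (a : ℕ) + b + 3 ≤ n then e n ⟨a + b + 1, by omega⟩ else 0 := by
  funext k
  rw [mul11_e_left_apply]
  split_ifs <;> simp only [e, Pi.single_apply, Fin.ext_iff, Pi.zero_apply] <;>
    split_ifs <;> first | rfl | omega

noncomputable def mul11Bilin (n : ℕ) : (Fin n → ℂ) →ₗ[ℂ] (Fin n → ℂ) →ₗ[ℂ] Fin n → ℂ :=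
  LinearMap.mk₂ ℂ (mul11 n) (mul11_add_left n) (mul11_smul_left n) (mul11_add_right n)
    (mul11_smul_right n)

lemma isDer_mul11_iff_e (n : ℕ) (D : (Fin n → ℂ) →ₗ[ℂ] Fin n → ℂ) :
    IsDer (mul11 n) D ↔ ∀ a b : Fin n,
      D (mul11 n (e n a) (e n b)) = mul11 n (D (e n a)) (e n b) + mul11 n (e n a) (D (e n b)) := by
  refine ⟨fun hD a b => hD _ _, fun h x y => ?_⟩
  have hbilin : (mul11Bilin n).compr₂ D = (mul11Bilin n).comp D + (mul11Bilin n).compl₂ D :=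
    LinearMap.ext_basis (Pi.basisFun ℂ (Fin n)) (Pi.basisFun ℂ (Fin n)) fun a b => by
      simpa [mul11Bilin, e] using h a b
  simpa [mul11Bilin] using LinearMap.congr_fun₂ hbilin x y

/-- The coefficient of `e_j` in `D e_i`, and `0` when `i` or `j` is out of range. -/
noncomputable def entry {n : ℕ} (D : (Fin n → ℂ) →ₗ[ℂ] Fin n → ℂ) (i j : ℕ) : ℂ :=
  if h : i < n ∧ j < n then D (e n ⟨i, h.1⟩) ⟨j, h.2⟩ else 0

lemma apply_e_apply_eq_entry {n : ℕ} (D : (Fin n → ℂ) →ₗ[ℂ] Fin n → ℂ) (a k : Fin n) :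
    D (e n a) k = entry D a k := by
  simp [entry]

lemma isDer_mul11_iff_entry (n : ℕ) (D : (Fin n → ℂ) →ₗ[ℂ] Fin n → ℂ) :
    IsDer (mul11 n) D ↔ ∀ a < n, ∀ b < n, ∀ k < n,
      (if a + b + 3 ≤ n then entry D (a + b + 1) k else 0) =
        (if b + 1 ≤ k ∧ k + 2 ≤ n then entry D a (k - b - 1) else 0) +
        (if a + 1 ≤ k ∧ k + 2 ≤ n then entry D b (k - a - 1) else 0) := by
  simp only [isDer_mul11_iff_e, funext_iff, mul11_e_e, Pi.add_apply, mul11_e_right_apply,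
    mul11_e_left_apply, apply_dite D, dite_apply, map_zero, Pi.zero_apply,
    apply_e_apply_eq_entry, dite_eq_ite, Fin.forall_iff]

structure IsDerShape {n : ℕ} (D : (Fin n → ℂ) →ₗ[ℂ] Fin n → ℂ) : Prop where
  entry_eq : ∀ i j, i + 2 ≤ n → j + 2 ≤ n →
    entry D i j = if i ≤ j then (i + 1) * entry D 0 (j - i) else 0
  entry_last_row : ∀ i, 1 ≤ i → i + 2 ≤ n → entry D i (n - 1) = 0
  entry_last_col : ∀ j, j + 3 ≤ n → entry D (n - 1) j = 0

lemma IsDer.isDerShape {n : ℕ} {D : (Fin n → ℂ) →ₗ[ℂ] Fin n → ℂ} (hD : IsDer (mul11 n) D) :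
    IsDerShape D := by
  have leib := (isDer_mul11_iff_entry n D).1 hD
  refine ⟨fun i j hi hj => ?_, fun i hi1 hi => ?_, fun j hj => ?_⟩
  · induction i generalizing j with
    | zero => simp
    | succ i ih =>
      have h := leib i (by omega) 0 (by omega) j (by omega)
      simp only [add_zero, zero_add, Nat.sub_zero, hj, and_true,
        if_pos (show i + 3 ≤ n by omega)] at h
      rw [h]
      by_cases hj1 : 1 ≤ j
      · rw [if_pos hj1, ih (j - 1) (by omega) (by omega), Nat.sub_sub, Nat.sub_sub, add_comm 1 i]
        split_ifs <;> first | omega | (push_cast; ring)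
      · simp [hj1, show ¬ i + 1 ≤ j by omega]
  · obtain ⟨i, rfl⟩ := Nat.exists_eq_add_of_le' hi1
    have h := leib i (by omega) 0 (by omega) (n - 1) (by omega)
    rw [if_pos (by omega), if_neg (by omega), if_neg (by omega)] at h
    simpa using h
  · have h := leib (n - 1) (by omega) 0 (by omega) (j + 1) (by omega)
    rw [if_neg (by omega), if_pos (by omega), if_neg (by omega)] at h
    simpa using h.symm

lemma IsDerShape.isDer {n : ℕ} {D : (Fin n → ℂ) →ₗ[ℂ] Fin n → ℂ} (hS : IsDerShape D) :
    IsDer (mul11 n) D := by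
  rw [isDer_mul11_iff_entry]
  intro a ha b hb k hk
  by_cases hk2 : k + 2 ≤ n
  swap
  · simp only [hk2, and_false, ↓reduceIte, add_zero]
    split_ifs with hab
    · rw [show k = n - 1 by omega]
      exact hS.entry_last_row _ (by omega) (by omega)
    · rfl
  simp only [hk2, and_true]
  by_cases ha2 : a + 2 ≤ n
  swap
  · rw [if_neg (show ¬ a + b + 3 ≤ n by omega), if_neg (show ¬ a + 1 ≤ k by omega), add_zero,
      show a = n - 1 by omega]
    split_ifs
    · rw [hS.entry_last_col _ (by omega)]
    · rfl
  by_cases hb2 : b + 2 ≤ n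
  swap
  · rw [if_neg (show ¬ a + b + 3 ≤ n by omega), if_neg (show ¬ b + 1 ≤ k by omega), zero_add,
      show b = n - 1 by omega]
    split_ifs
    · rw [hS.entry_last_col _ (by omega)]
    · rfl
  rw [hS.entry_eq a _ ha2 (by omega), hS.entry_eq b _ hb2 (by omega),
    show k - b - 1 - a = k - (a + b + 1) by omega, show k - a - 1 - b = k - (a + b + 1) by omega]
  by_cases hab : a + b + 3 ≤ n
  · rw [if_pos hab, hS.entry_eq _ _ (by omega) hk2]
    split_ifs <;> first | omega | (push_cast; ring)
  · rw [if_neg hab]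
    split_ifs <;> first | omega | ring

lemma isDerShape_iff_exists {n : ℕ} (hn : 2 ≤ n) (D : (Fin n → ℂ) →ₗ[ℂ] Fin n → ℂ) :
    IsDerShape D ↔
      ∃ (α : Fin n → ℂ) (β1 β2 : ℂ),
        (∀ k : Fin n, D (e n ⟨0, by omega⟩) k = α k) ∧
        (∀ a k : Fin n, 1 ≤ (a : ℕ) → (a : ℕ) ≤ n - 2 →
          D (e n a) k =
            if (a : ℕ) ≤ (k : ℕ) ∧ (k : ℕ) ≤ n - 2 then
              (((a : ℕ) + 1 : ℕ) : ℂ) *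
                α ⟨(k : ℕ) - (a : ℕ), lt_of_le_of_lt (Nat.sub_le _ _) k.isLt⟩
            else 0) ∧
        D (e n ⟨n - 1, by omega⟩) =
          β1 • e n ⟨n - 2, by omega⟩ + β2 • e n ⟨n - 1, by omega⟩ := by
  constructor
  · intro hS
    refine ⟨fun k => D (e n ⟨0, by omega⟩) k, entry D (n - 1) (n - 2), entry D (n - 1) (n - 1),
      fun k => rfl, fun a k ha1 ha2 => ?_, funext fun k => ?_⟩
    · simp only [apply_e_apply_eq_entry]
      by_cases hk : (k : ℕ) + 2 ≤ n
      · rw [hS.entry_eq _ _ (by omega) hk]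
        split_ifs <;> first | omega | (push_cast; ring)
      · have hk' : (k : ℕ) = n - 1 := by omega
        rw [if_neg (by omega), hk', hS.entry_last_row _ ha1 (by omega)]
    · rw [apply_e_apply_eq_entry]
      rcases (by omega : (k : ℕ) + 3 ≤ n ∨ (k : ℕ) = n - 2 ∨ (k : ℕ) = n - 1) with hk | hk | hk
      · simp [hS.entry_last_col _ hk, e, Fin.ext_iff,
          show (k : ℕ) ≠ n - 2 by omega, show (k : ℕ) ≠ n - 1 by omega]
      all_goals
        simp [hk, e, Pi.single_apply, Fin.ext_iff]
        omega
  · rintro ⟨α, β1, β2, h0, hmid, hlast⟩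
    have hα : ∀ j (hj : j < n), α ⟨j, hj⟩ = entry D 0 j := fun j hj => by
      rw [← h0, apply_e_apply_eq_entry]
    refine ⟨fun i j hi hj => ?_, fun i hi1 hi => ?_, fun j hj => ?_⟩
    · rcases Nat.eq_zero_or_pos i with rfl | hi1
      · simp
      have h := hmid ⟨i, by omega⟩ ⟨j, by omega⟩ hi1 (show i ≤ n - 2 by omega)
      simp only [apply_e_apply_eq_entry, hα] at h
      rw [h]
      split_ifs <;> first | omega | (push_cast; ring)
    · have h := hmid ⟨i, by omega⟩ ⟨n - 1, by omega⟩ hi1 (show i ≤ n - 2 by omega)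
      simpa [apply_e_apply_eq_entry, show ¬ n - 1 ≤ n - 2 by omega] using h
    · have h := congr_fun hlast ⟨j, by omega⟩
      rw [apply_e_apply_eq_entry] at h
      simpa [e, Pi.single_apply, Fin.ext_iff,
        show j ≠ n - 2 by omega, show j ≠ n - 1 by omega] using h

lemma ext_entry {n : ℕ} {D D' : (Fin n → ℂ) →ₗ[ℂ] Fin n → ℂ}
    (h : ∀ i < n, ∀ j < n, entry D i j = entry D' i j) : D = D' :=
  (Pi.basisFun ℂ (Fin n)).ext fun a => funext fun k => by
    simpa [← apply_e_apply_eq_entry, e] using h a a.isLt k k.isLt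

lemma IsDerShape.ext {n : ℕ} {D D' : (Fin n → ℂ) →ₗ[ℂ] Fin n → ℂ} (hS : IsDerShape D)
    (hS' : IsDerShape D') (h0 : ∀ j < n, entry D 0 j = entry D' 0 j)
    (hlast : ∀ j < n, entry D (n - 1) j = entry D' (n - 1) j) : D = D' := by
  refine ext_entry fun i hi j hj => ?_
  rcases (by omega : i = 0 ∨ i = n - 1 ∨ 1 ≤ i ∧ i + 2 ≤ n) with rfl | rfl | ⟨hi1, hi2⟩
  · exact h0 j hj
  · exact hlast j hj
  · by_cases hj2 : j + 2 ≤ n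
    · rw [hS.entry_eq i j hi2 hj2, hS'.entry_eq i j hi2 hj2, h0 _ (by omega)]
    · rw [show j = n - 1 by omega, hS.entry_last_row i hi1 hi2, hS'.entry_last_row i hi1 hi2]

lemma exists_isDerShape {n : ℕ} (hn : 2 ≤ n) (α : Fin n → ℂ) (β1 β2 : ℂ) :
    ∃ D : (Fin n → ℂ) →ₗ[ℂ] Fin n → ℂ, IsDerShape D ∧ D (e n ⟨0, by omega⟩) = α ∧
      D (e n ⟨n - 1, by omega⟩) = β1 • e n ⟨n - 2, by omega⟩ + β2 • e n ⟨n - 1, by omega⟩ := by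
  let col : Fin n → Fin n → ℂ := fun a =>
    if (a : ℕ) = 0 then α
    else if (a : ℕ) = n - 1 then β1 • e n ⟨n - 2, by omega⟩ + β2 • e n ⟨n - 1, by omega⟩
    else fun k => if (a : ℕ) ≤ k ∧ (k : ℕ) ≤ n - 2 then ((a + 1 : ℕ) : ℂ) * α ⟨k - a, by omega⟩
      else 0
  let D := (Pi.basisFun ℂ (Fin n)).constr ℂ col
  have hD : ∀ a, D (e n a) = col a := fun a => by
    rw [show e n a = Pi.basisFun ℂ (Fin n) a by simp [e], Module.Basis.constr_basis]
  refine ⟨D, (isDerShape_iff_exists hn D).2 ⟨α, β1, β2, fun k => ?_, fun a k ha1 ha2 => ?_, ?_⟩,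
    ?_, ?_⟩ <;> simp only [hD, col, show n - 1 ≠ 0 by omega, ↓reduceIte]
  rw [if_neg (by omega), if_neg (by omega)]

noncomputable def derCoords {n : ℕ} (hn : 2 ≤ n) :
    derSubmodule n (mul11 n) (mul11_add_left n) (mul11_add_right n) (mul11_smul_left n)
      (mul11_smul_right n) →ₗ[ℂ] (Fin n → ℂ) × ℂ × ℂ where
  toFun D := (D.1 (e n ⟨0, by omega⟩), D.1 (e n ⟨n - 1, by omega⟩) ⟨n - 2, by omega⟩,
    D.1 (e n ⟨n - 1, by omega⟩) ⟨n - 1, by omega⟩)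
  map_add' _ _ := rfl
  map_smul' _ _ := rfl

lemma derCoords_bijective {n : ℕ} (hn : 2 ≤ n) : Function.Bijective (derCoords hn) := by
  constructor
  · rintro ⟨D, hD⟩ ⟨D', hD'⟩ h
    simp only [derCoords, LinearMap.coe_mk, AddHom.coe_mk, Prod.mk.injEq] at h
    obtain ⟨h0, h1, h2⟩ := h
    have hS : IsDerShape D := IsDer.isDerShape hD
    have hS' : IsDerShape D' := IsDer.isDerShape hD'
    refine Subtype.ext (hS.ext hS' (fun j hj => ?_) (fun j hj => ?_))
    · simpa only [apply_e_apply_eq_entry] using congr_fun h0 ⟨j, hj⟩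
    · rcases (by omega : j + 3 ≤ n ∨ j = n - 2 ∨ j = n - 1) with hj3 | rfl | rfl
      · rw [hS.entry_last_col j hj3, hS'.entry_last_col j hj3]
      · simpa only [apply_e_apply_eq_entry] using h1
      · simpa only [apply_e_apply_eq_entry] using h2
  · rintro ⟨α, β1, β2⟩
    obtain ⟨D, hS, h0, hlast⟩ := exists_isDerShape hn α β1 β2
    refine ⟨⟨D, hS.isDer⟩, ?_⟩
    simp only [derCoords, LinearMap.coe_mk, AddHom.coe_mk, h0, hlast]
    simp [e, Fin.ext_iff, show n - 2 ≠ n - 1 by omega]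

theorem stmt15 (n : ℕ) (hn : 3 < n) :
    (∀ D : (Fin n → ℂ) →ₗ[ℂ] (Fin n → ℂ),
      IsDer (mul11 n) D ↔
        ∃ (α : Fin n → ℂ) (β1 β2 : ℂ),
          (∀ k : Fin n, D (e n ⟨0, by omega⟩) k = α k) ∧
          (∀ a k : Fin n, 1 ≤ (a : ℕ) → (a : ℕ) ≤ n - 2 →
            D (e n a) k =
              if h : (a : ℕ) ≤ (k : ℕ) ∧ (k : ℕ) ≤ n - 2 then
                (((a : ℕ) + 1 : ℕ) : ℂ) *
                  α ⟨(k : ℕ) - (a : ℕ), lt_of_le_of_lt (Nat.sub_le _ _) k.isLt⟩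
              else 0) ∧
          D (e n ⟨n - 1, by omega⟩) =
            β1 • e n ⟨n - 2, by omega⟩ + β2 • e n ⟨n - 1, by omega⟩) ∧
    Module.finrank ℂ
      (derSubmodule n (mul11 n) (mul11_add_left n) (mul11_add_right n)
        (mul11_smul_left n) (mul11_smul_right n)) = n + 2 := by
  have hn2 : 2 ≤ n := by omega
  refine ⟨fun D => ⟨fun hD => (isDerShape_iff_exists hn2 D).1 hD.isDerShape,
    fun h => ((isDerShape_iff_exists hn2 D).2 h).isDer⟩, ?_⟩
  rw [(LinearEquiv.ofBijective _ (derCoords_bijective hn2)).finrank_eq]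
  simp
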